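/- Let q be a landmark of a STRIPS planning problem P that does not hold in the initial state, and let p₁, …, p_k be atoms such that every action a with q ∈ eff⁺_a has at least one pᵢ ∈ pre_a. Then the disjunction p₁ ∨ ⋯ ∨ p_k is a disjunctive landmark of P, i.e., for every solution plan, some state of the induced trajectory satisfies at least one pᵢ. -/

import Mathlib

structure Act (Atom : Type*) where
  pre : Set Atom
  addEff : Set Atom
  delEff : Set Atom

structure Prob (Atom : Type*) where
  I : Set Atom
  G : Set Atom
  acts : Set (Act Atom)

/-- STRIPS successor state: s' = (s \ eff⁻) ∪ eff⁺. -/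
def stripsSucc {Atom : Type*} (s : Set Atom) (a : Act Atom) : Set Atom :=
  (s \ a.delEff) ∪ a.addEff

/-- Each action in the plan is applicable in the state where it is applied. -/
def validFrom {Atom : Type*} (s : Set Atom) : List (Act Atom) → Prop
  | [] => True
  | a :: rest => a.pre ⊆ s ∧ validFrom (stripsSucc s a) rest

/-- A plan solves P iff its actions belong to P, are applicable along the way,
and the goal holds in the final state. -/
def Solves {Atom : Type*} (P : Prob Atom) (π : List (Act Atom)) : Prop :=
  (∀ a ∈ π, a ∈ P.acts) ∧ validFrom P.I π ∧ P.G ⊆ π.foldl stripsSucc P.I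

/-- The trajectory of states induced by executing plan π from the initial state. -/
def traj {Atom : Type*} (P : Prob Atom) (π : List (Act Atom)) : List (Set Atom) :=
  List.scanl stripsSucc P.I π

/-- An atom is a landmark iff it holds in some state of every solution trajectory. -/
def IsLandmark {Atom : Type*} (P : Prob Atom) (p : Atom) : Prop :=
  ∀ π, Solves P π → ∃ s ∈ traj P π, p ∈ s

/-! Since `q` fails initially, the first action of a solution plan after which `q` holds must
add `q`, and its precondition holds in the state where it is applied; by hypothesis that
precondition contains some `pᵢ`. -/

theorem mem_addEff_of_mem_stripsSucc {Atom : Type*} {s : Set Atom} {a : Act Atom} {q : Atom}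
    (h : q ∈ stripsSucc s a) (hq : q ∉ s) : q ∈ a.addEff :=
  h.resolve_left fun h' => hq h'.1

theorem exists_achiever_of_mem_scanl {Atom : Type*} {q : Atom} :
    ∀ (π : List (Act Atom)) (s : Set Atom), validFrom s π → q ∉ s →
      (∃ t ∈ List.scanl stripsSucc s π, q ∈ t) →
      ∃ a ∈ π, q ∈ a.addEff ∧ ∃ t ∈ List.scanl stripsSucc s π, a.pre ⊆ t
  | [], s, _, hqs, ⟨t, ht, hqt⟩ => by
    rw [List.scanl_nil, List.mem_singleton] at ht
    exact absurd (ht ▸ hqt) hqs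
  | a :: π, s, ⟨hpre, hvalid⟩, hqs, ⟨t, ht, hqt⟩ => by
    rw [List.scanl_cons, List.mem_cons] at ht
    rw [List.scanl_cons]
    by_cases hq' : q ∈ stripsSucc s a
    · exact ⟨a, List.mem_cons_self, mem_addEff_of_mem_stripsSucc hq' hqs,
        s, List.mem_cons_self, hpre⟩
    · obtain rfl | ht := ht
      · exact absurd hqt hqs
      obtain ⟨b, hb, hqb, t', ht', hbt'⟩ :=
        exists_achiever_of_mem_scanl π _ hvalid hq' ⟨t, ht, hqt⟩
      exact ⟨b, List.mem_cons_of_mem a hb, hqb, t', List.mem_cons_of_mem s ht', hbt'⟩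

/-- Disjunctive landmark rule: if q is a landmark not holding initially and every
action adding q has some pᵢ among the given atoms as a precondition, then every
solution trajectory contains a state satisfying at least one pᵢ. -/
theorem disjunctive_landmark {Atom : Type*} (P : Prob Atom) (q : Atom)
    (ps : List Atom)
    (hq : IsLandmark P q) (hq0 : q ∉ P.I)
    (hpre : ∀ a ∈ P.acts, q ∈ a.addEff → ∃ p ∈ ps, p ∈ a.pre) :
    ∀ π, Solves P π → ∃ s ∈ traj P π, ∃ p ∈ ps, p ∈ s := by
  intro π hsol
  obtain ⟨a, ha, hqa, t, ht, hpre_t⟩ :=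
    exists_achiever_of_mem_scanl π P.I hsol.2.1 hq0 (hq π hsol)
  obtain ⟨p, hp, hpa⟩ := hpre a (hsol.1 a ha) hqa
  exact ⟨t, ht, p, hp, hpre_t hpa⟩
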